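/- Let n, a, t be positive integers and let F(q) = ∑_{d∣n} μ(d) · ∏_{j=1}^{n/d} (1 + q^{jd} + q^{2jd} + ⋯ + q^{(a−1)jd}) ∈ ℤ[q]. Then the value of F at ζ_n^t, where ζ_n = e^{2πi/n}, equals ∑_{d∣n, gcd(ta, n/d) = gcd(t, n/d)} μ(d) · a^{gcd(n/d, t)}, the sum being over positive divisors d of n satisfying gcd(ta, n/d) = gcd(t, n/d). -/

import Mathlib

/-!
Fix `d ∣ n` and put `m = n / d`. As `ζ_n ^ d` is a primitive `m`-th root of unity,
`y = ζ_n ^ (d t)` is a primitive `N`-th root of unity with `N = m / gcd(m, t)`, and the `d`-th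
product is `∏_{j=1}^{m} [a]_{y^j}`, where `[a]_x = 1 + x + ⋯ + x^(a-1)`. Its factors are
`N`-periodic in `j`, so it is the `gcd(m, t)`-th power of `P = ∏_{ζ^N = 1} [a]_ζ`.
If `gcd(a, N) > 1`, some `ζ ≠ 1` has `ζ^a = 1`, so `[a]_ζ = 0` and `P = 0`. If `gcd(a, N) = 1`,
then `[a]_ζ (ζ - 1) = ζ^a - 1` and `ζ ↦ ζ^a` permutes the roots `ζ ≠ 1`, so their factors
multiply to `1` and `P = [a]_1 = a`. Finally, `gcd(a, N) = 1` iff `gcd(ta, m) = gcd(t, m)`.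
-/

open Polynomial ArithmeticFunction Finset Complex

theorem Nat.gcd_mul_eq_gcd_iff_coprime_div_gcd {t a m : ℕ} (hm : 0 < m) :
    (t * a).gcd m = t.gcd m ↔ a.Coprime (m / m.gcd t) := by
  have hg : 0 < t.gcd m := Nat.gcd_pos_of_pos_right t hm
  obtain ⟨t', m', hcop, ht, hm'⟩ := Nat.exists_coprime t m
  rw [Nat.gcd_comm m t]
  generalize t.gcd m = g at hg ht hm' ⊢
  subst ht hm'
  rw [mul_right_comm, Nat.gcd_mul_right, hcop.gcd_mul_left_cancel, Nat.mul_div_cancel _ hg,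
    Nat.coprime_iff_gcd_eq_one, mul_eq_right₀ hg.ne']

theorem Finset.prod_Icc_one_eq_prod_range {M : Type*} [CommMonoid M] {f : ℕ → M} {n : ℕ}
    (h : f n = f 0) : ∏ j ∈ Icc 1 n, f j = ∏ j ∈ range n, f j := by
  rcases n with _ | n
  · simp
  · rw [prod_range_succ', ← h, Finset.prod_Icc_succ_top (by omega), range_eq_Ico, prod_Ico_add']
    rfl

theorem Function.Periodic.prod_range_mul {M : Type*} [CommMonoid M] {f : ℕ → M} {N : ℕ}
    (hf : Function.Periodic f N) (g : ℕ) :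
    ∏ j ∈ range (g * N), f j = (∏ j ∈ range N, f j) ^ g := by
  induction g with
  | zero => simp
  | succ g ih =>
    rw [add_one_mul, prod_range_add, ih, pow_succ]
    congr 1
    refine prod_congr rfl fun j _ => ?_
    rw [add_comm]
    exact hf.nat_mul g j

theorem Function.Periodic.prod_Icc_one_mul {M : Type*} [CommMonoid M] {f : ℕ → M} {N : ℕ}
    (hf : Function.Periodic f N) (g : ℕ) :
    ∏ j ∈ Icc 1 (g * N), f j = (∏ j ∈ range N, f j) ^ g := by
  rw [prod_Icc_one_eq_prod_range (n := g * N) (hf.nat_mul g).eq, hf.prod_range_mul]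

theorem IsPrimitiveRoot.pow_div_gcd {M : Type*} [CommMonoid M] {ζ : M} {k : ℕ}
    (h : IsPrimitiveRoot ζ k) (hk : 0 < k) (t : ℕ) : IsPrimitiveRoot (ζ ^ t) (k / k.gcd t) := by
  have hg : 0 < k.gcd t := Nat.gcd_pos_of_pos_left t hk
  have := (h.pow_of_dvd hg.ne' (Nat.gcd_dvd_left k t)).pow_of_coprime (t / k.gcd t)
    (Nat.coprime_div_gcd_div_gcd hg).symm
  rwa [← pow_mul, Nat.mul_div_cancel' (Nat.gcd_dvd_right k t)] at this

section
variable {R : Type*} [CommRing R] [IsDomain R]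

theorem IsPrimitiveRoot.prod_range_pow_eq_prod_nthRootsFinset {M : Type*} [CommMonoid M]
    {y : R} {N : ℕ} (hy : IsPrimitiveRoot y N) (hN : 0 < N) (f : R → M) :
    ∏ j ∈ range N, f (y ^ j) = ∏ ζ ∈ nthRootsFinset N (1 : R), f ζ := by
  classical
  have : NeZero N := ⟨hN.ne'⟩
  have himage : nthRootsFinset N (1 : R) = (range N).image (y ^ ·) := by
    ext ζ
    simp only [Polynomial.mem_nthRootsFinset hN, mem_image, mem_range]
    refine ⟨hy.eq_pow_of_pow_eq_one, ?_⟩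
    rintro ⟨j, -, rfl⟩
    rw [← pow_mul, mul_comm, pow_mul, hy.pow_eq_one, one_pow]
  rw [himage, prod_image hy.injOn_pow]

theorem prod_nthRootsFinset_geom_sum_of_coprime {N a : ℕ} (hN : 0 < N) (h : a.Coprime N) :
    ∏ ζ ∈ nthRootsFinset N (1 : R), ∑ k ∈ range a, ζ ^ k = a := by
  classical
  set S := (nthRootsFinset N (1 : R)).erase 1
  have hS : ∀ {ζ}, ζ ∈ S ↔ ζ ≠ 1 ∧ ζ ^ N = 1 := by
    simp [S, mem_nthRootsFinset hN]
  set b := a ^ (N.totient - 1)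
  have hab : a * b ≡ 1 [MOD N] := by
    rw [← pow_succ', Nat.sub_add_cancel (Nat.totient_pos.2 hN)]
    exact Nat.ModEq.pow_totient h
  have hba : b * a ≡ 1 [MOD N] := by rwa [mul_comm]
  have hinv {c c' : ℕ} (hcc' : c * c' ≡ 1 [MOD N]) {ζ : R} (hζ : ζ ^ N = 1) :
      (ζ ^ c) ^ c' = ζ := by
    rw [← pow_mul, pow_eq_pow_of_modEq hcc' hζ, pow_one]
  have hmaps {c c' : ℕ} (hcc' : c * c' ≡ 1 [MOD N]) {ζ : R} (hζ : ζ ∈ S) :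
      ζ ^ c ∈ S := by
    obtain ⟨hζ1, hζN⟩ := hS.1 hζ
    refine hS.2 ⟨fun h1 => hζ1 ?_, by rw [← pow_mul, mul_comm, pow_mul, hζN, one_pow]⟩
    rw [← hinv hcc' hζN, h1, one_pow]
  have hperm : ∏ ζ ∈ S, (ζ ^ a - 1) = ∏ ζ ∈ S, (ζ - 1) :=
    prod_nbij' (· ^ a) (· ^ b) (fun _ => hmaps hab) (fun _ => hmaps hba)
      (fun _ hζ => hinv hab (hS.1 hζ).2) (fun _ hζ => hinv hba (hS.1 hζ).2) (fun _ _ => rfl)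
  have hne : ∏ ζ ∈ S, (ζ - 1) ≠ 0 :=
    prod_ne_zero_iff.2 fun ζ hζ => sub_ne_zero.2 (hS.1 hζ).1
  have hprod : ∏ ζ ∈ S, ∑ k ∈ range a, ζ ^ k = 1 := by
    rw [← mul_eq_right₀ hne, ← prod_mul_distrib, ← hperm]
    exact prod_congr rfl fun ζ _ => geom_sum_mul ζ a
  rw [← mul_prod_erase _ _ ((mem_nthRootsFinset hN 1).2 (one_pow N)), hprod]
  simp

theorem IsPrimitiveRoot.prod_range_geom_sum_pow {y : R} {N : ℕ} (hy : IsPrimitiveRoot y N)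
    (hN : 0 < N) (a : ℕ) :
    ∏ j ∈ range N, ∑ k ∈ range a, (y ^ j) ^ k = if a.Coprime N then (a : R) else 0 := by
  split_ifs with h
  · rw [hy.prod_range_pow_eq_prod_nthRootsFinset hN (fun ζ => ∑ k ∈ range a, ζ ^ k)]
    exact prod_nthRootsFinset_geom_sum_of_coprime hN h
  · set e := a.gcd N
    have he : 1 < e := Nat.lt_of_le_of_ne (Nat.gcd_pos_of_pos_right a hN) (Ne.symm h)
    have hlt : N / e < N := Nat.div_lt_self hN he
    have hNe : 0 < N / e := Nat.div_pos (Nat.le_of_dvd hN (Nat.gcd_dvd_right a N)) (by omega)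
    have hζ1 : y ^ (N / e) ≠ 1 := hy.pow_ne_one_of_pos_of_lt hNe.ne' hlt
    have hζa : (y ^ (N / e)) ^ a = 1 := by
      rw [← pow_mul, hy.pow_eq_one_iff_dvd]
      have h := Nat.mul_dvd_mul_left (N / e) (Nat.gcd_dvd_left a N : e ∣ a)
      rwa [Nat.div_mul_cancel (Nat.gcd_dvd_right a N : e ∣ N)] at h
    refine prod_eq_zero (mem_range.2 hlt) ?_
    have := geom_sum_mul (y ^ (N / e)) a
    rw [hζa, sub_self, mul_eq_zero] at this
    exact this.resolve_right (sub_ne_zero.2 hζ1)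

theorem IsPrimitiveRoot.prod_Icc_geom_sum_pow {z : R} {m : ℕ} (hz : IsPrimitiveRoot z m)
    (hm : 0 < m) (t a : ℕ) :
    ∏ j ∈ Icc 1 m, ∑ k ∈ range a, ((z ^ t) ^ j) ^ k =
      if (t * a).gcd m = t.gcd m then (a : R) ^ m.gcd t else 0 := by
  set N := m / m.gcd t
  have hy : IsPrimitiveRoot (z ^ t) N := hz.pow_div_gcd hm t
  have hN : 0 < N := Nat.div_pos (Nat.gcd_le_left t hm) (Nat.gcd_pos_of_pos_left t hm)
  have hper : Function.Periodic (fun j => ∑ k ∈ range a, ((z ^ t) ^ j) ^ k) N := fun j => by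
    simp only [pow_add, hy.pow_eq_one, mul_one]
  have hmN : m.gcd t * N = m := Nat.mul_div_cancel' (Nat.gcd_dvd_left m t)
  have hprod := hper.prod_Icc_one_mul (m.gcd t)
  rw [hmN] at hprod
  rw [hprod, hy.prod_range_geom_sum_pow hN]
  simp only [Nat.gcd_mul_eq_gcd_iff_coprime_div_gcd hm]
  split_ifs
  · rfl
  · exact zero_pow (Nat.gcd_pos_of_pos_left t hm).ne'

end

theorem F_at_root_eq_sum_general (n a t : ℕ) :
    Polynomial.aeval (Complex.exp (2 * Real.pi * Complex.I / n) ^ t)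
      (∑ d ∈ n.divisors, Polynomial.C ((moebius d : ℤ)) *
        ∏ j ∈ Finset.Icc 1 (n / d),
          ∑ k ∈ Finset.range a, (Polynomial.X : Polynomial ℤ) ^ (k * j * d)) =
      ∑ d ∈ n.divisors.filter
          (fun d => Nat.gcd (t * a) (n / d) = Nat.gcd t (n / d)),
        (moebius d : ℂ) * (a : ℂ) ^ (Nat.gcd (n / d) t) := by
  simp only [map_sum, map_mul, map_prod, map_intCast, map_pow, aeval_X, eq_intCast]
  rw [sum_filter]
  refine sum_congr rfl fun d hd => ?_
  obtain ⟨hdn, hn⟩ := Nat.mem_divisors.mp hd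
  have hd0 := Nat.pos_of_mem_divisors hd
  have hz := (isPrimitiveRoot_exp n hn).pow_of_dvd hd0.ne' hdn
  have hm : 0 < n / d := Nat.div_pos (Nat.divisor_le hd) hd0
  rw [← mul_ite_zero, ← hz.prod_Icc_geom_sum_pow hm]
  congr 1
  refine prod_congr rfl fun j _ => sum_congr rfl fun k _ => ?_
  ring

/-- Let `F(q) = ∑_{d∣n} μ(d) ∏_{j=1}^{n/d} (1 + q^{jd} + ⋯ + q^{(a−1)jd}) ∈ ℤ[q]`. Then
`F(ζ_n^t) = ∑_{d∣n, gcd(ta,n/d)=gcd(t,n/d)} μ(d) a^{gcd(n/d,t)}`. -/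
theorem F_at_root_eq_sum (n a t : ℕ) (hn : 0 < n) (ha : 0 < a) (ht : 0 < t) :
    Polynomial.aeval (Complex.exp (2 * Real.pi * Complex.I / n) ^ t)
      (∑ d ∈ n.divisors, Polynomial.C ((moebius d : ℤ)) *
        ∏ j ∈ Finset.Icc 1 (n / d),
          ∑ k ∈ Finset.range a, (Polynomial.X : Polynomial ℤ) ^ (k * j * d)) =
      ∑ d ∈ n.divisors.filter
          (fun d => Nat.gcd (t * a) (n / d) = Nat.gcd t (n / d)),
        (moebius d : ℂ) * (a : ℂ) ^ (Nat.gcd (n / d) t) :=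
  F_at_root_eq_sum_general n a t
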